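/- arXiv:2312.14601 — 3 statements merged into one kernel-verified Lean document; each statement's English description precedes it below -/
import Mathlib

section
/- Let X ~ IG(μ,λ) and f be a differentiable function on (0,∞) with lim_{x→0} f(x)φ(x) = lim_{x→∞} f(x)φ(x) = 0 (φ the IG density), with all involved expectations finite. Then E[f(X)(λX² − μ²X − λμ²)] = 2μ² E[X² f'(X)]. -/
/-!
Since `φ'/φ = λ/(2x²) - 3/(2x) - λ/(2μ²)`, the function `g = x² f φ` has derivative
`x² f' φ - f (λx² - μ²x - λμ²) φ / (2μ²)`, so the identity says `∫₀^∞ g' = 0`. Now `g → 0` at `0⁺`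
by hypothesis, and at `+∞` the function `g` has a limit because `g'` is integrable; that limit must
vanish, since `g · (λ - μ²/x - λμ²/x²) = f (λx² - μ²x - λμ²) φ` is integrable and its limit at `+∞`
is `λ` times the limit of `g`.
-/

open MeasureTheory Real Set Filter

/-- The density of the inverse Gaussian distribution `IG(μ,λ)`. -/
noncomputable def igPDF (m l : ℝ) (x : ℝ) : ℝ :=
  if 0 < x then
    Real.sqrt (l / (2 * Real.pi)) * Real.exp (l / m) * x ^ (-(3 : ℝ) / 2) *
      Real.exp (-(l / (2 * m)) * (x / m + m / x))
  else 0

open Topology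

section ImproperIntegral

variable {E : Type*} [NormedAddCommGroup E] {a : ℝ}

theorem eq_zero_of_tendsto_atTop_of_integrableOn_Ioi {f : ℝ → E} {c : E}
    (hf : IntegrableOn f (Ioi a)) (hc : Tendsto f atTop (𝓝 c)) : c = 0 := by
  refine IntegrableAtFilter.eq_zero_of_tendsto ⟨Ioi a, Ioi_mem_atTop a, hf⟩ (fun s hs => ?_) hc
  obtain ⟨b, hb⟩ := mem_atTop_sets.mp hs
  exact top_le_iff.mp (volume_Ici (a := b) ▸ measure_mono hb)

theorem integral_Ioi_of_hasDerivAt_of_tendsto_nhdsGT [NormedSpace ℝ E] [CompleteSpace E]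
    {g g' : ℝ → E} {c d : E} (hderiv : ∀ x ∈ Ioi a, HasDerivAt g (g' x) x)
    (hg' : IntegrableOn g' (Ioi a))
    (hbot : Tendsto g (𝓝[>] a) (𝓝 c)) (htop : Tendsto g atTop (𝓝 d)) :
    ∫ x in Ioi a, g' x = d - c := by
  rw [← Ici_sdiff_left] at hbot
  have hderiv' : ∀ x ∈ Ioi a, HasDerivAt (Function.update g a c) (g' x) x := fun x hx =>
    (hderiv x hx).congr_of_eventuallyEq <| by
      filter_upwards [eventually_ne_nhds (ne_of_gt hx)] with y hy
      exact Function.update_of_ne hy c g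
  have htop' : Tendsto (Function.update g a c) atTop (𝓝 d) := htop.congr' <| by
    filter_upwards [eventually_ne_atTop a] with x hx
    exact (Function.update_of_ne hx c g).symm
  simpa using integral_Ioi_of_hasDerivAt_of_tendsto
    (continuousWithinAt_update_same.mpr hbot) hderiv' hg' htop'

end ImproperIntegral

theorem tendsto_atTop_zero_of_hasDerivAt_of_integrableOn_mul {g g' r : ℝ → ℝ} {a L : ℝ}
    (hderiv : ∀ x ∈ Ioi a, HasDerivAt g (g' x) x) (hg' : IntegrableOn g' (Ioi a))
    (hr : Tendsto r atTop (𝓝 L)) (hL : L ≠ 0)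
    (hgr : IntegrableOn (fun x => g x * r x) (Ioi a)) :
    Tendsto g atTop (𝓝 0) := by
  have hlim := tendsto_limUnder_of_hasDerivAt_of_integrableOn_Ioi hderiv hg'
  have hzero : limUnder atTop g * L = 0 :=
    eq_zero_of_tendsto_atTop_of_integrableOn_Ioi hgr (hlim.mul hr)
  rw [mul_eq_zero, or_iff_left hL] at hzero
  rwa [hzero] at hlim

theorem hasDerivAt_igPDF {m : ℝ} (l : ℝ) (hm : m ≠ 0) {x : ℝ} (hx : 0 < x) :
    HasDerivAt (igPDF m l)
      (igPDF m l x * (l / (2 * x ^ 2) - 3 / (2 * x) - l / (2 * m ^ 2))) x := by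
  set C := √(l / (2 * π)) * exp (l / m)
  have hpow : HasDerivAt (fun y : ℝ => y ^ (-(3 : ℝ) / 2))
      (x ^ (-(3 : ℝ) / 2) * (-3 / (2 * x))) x := by
    convert Real.hasDerivAt_rpow_const (p := -(3 : ℝ) / 2) (Or.inl hx.ne') using 1
    rw [Real.rpow_sub hx, Real.rpow_one]
    field_simp
  have hexp : HasDerivAt (fun y : ℝ => exp (-(l / (2 * m)) * (y / m + m / y)))
      (exp (-(l / (2 * m)) * (x / m + m / x)) * (l / (2 * x ^ 2) - l / (2 * m ^ 2))) x := by
    have hinner : HasDerivAt (fun y : ℝ => y / m + m / y) (1 / m - m / x ^ 2) x :=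
      (((hasDerivAt_id x).div_const m).add
        ((hasDerivAt_const x m).div (hasDerivAt_id x) hx.ne')).congr_deriv (by simp only [id]; ring)
    convert (hinner.const_mul (-(l / (2 * m)))).exp using 1
    field_simp
    ring
  have hprod := (hpow.const_mul C).mul hexp
  have hpdf : ∀ y, 0 < y → igPDF m l y =
      C * y ^ (-(3 : ℝ) / 2) * exp (-(l / (2 * m)) * (y / m + m / y)) := fun y hy =>
    if_pos hy
  refine (hprod.congr_deriv ?_).congr_of_eventuallyEq ?_
  · rw [hpdf x hx]
    ring
  · filter_upwards [Ioi_mem_nhds hx] with y hy using hpdf y hy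

theorem hasDerivAt_sq_mul_mul_igPDF {m : ℝ} (l : ℝ) (hm : m ≠ 0) {f : ℝ → ℝ} {f' x : ℝ}
    (hx : 0 < x) (hf : HasDerivAt f f' x) :
    HasDerivAt (fun y => y ^ 2 * f y * igPDF m l y)
      (x ^ 2 * f' * igPDF m l x -
        f x * (l * x ^ 2 - m ^ 2 * x - l * m ^ 2) * igPDF m l x / (2 * m ^ 2)) x := by
  refine (((hasDerivAt_pow 2 x).mul hf).mul (hasDerivAt_igPDF l hm hx)).congr_deriv ?_
  simp only [Pi.mul_apply]
  field_simp
  ring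

theorem ig_stein_identity_general (m l : ℝ) (hm : 0 < m) (hl : 0 < l) (f : ℝ → ℝ)
    (hf : DifferentiableOn ℝ f (Ioi (0 : ℝ)))
    (hlim0 : Tendsto (fun x => f x * igPDF m l x) (nhdsWithin 0 (Ioi (0 : ℝ))) (nhds 0))
    (hint1 : IntegrableOn
      (fun x => f x * (l * x ^ 2 - m ^ 2 * x - l * m ^ 2) * igPDF m l x)
      (Ioi (0 : ℝ)))
    (hint2 : IntegrableOn (fun x => x ^ 2 * deriv f x * igPDF m l x) (Ioi (0 : ℝ))) :
    ∫ x in Ioi (0 : ℝ), f x * (l * x ^ 2 - m ^ 2 * x - l * m ^ 2) * igPDF m l x =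
      2 * m ^ 2 * ∫ x in Ioi (0 : ℝ), x ^ 2 * deriv f x * igPDF m l x := by
  set g : ℝ → ℝ := fun x => x ^ 2 * f x * igPDF m l x
  have hderiv : ∀ x ∈ Ioi (0 : ℝ), HasDerivAt g (x ^ 2 * deriv f x * igPDF m l x -
      f x * (l * x ^ 2 - m ^ 2 * x - l * m ^ 2) * igPDF m l x / (2 * m ^ 2)) x :=
    fun x hx => hasDerivAt_sq_mul_mul_igPDF l hm.ne' hx
      ((hf x hx).differentiableAt (Ioi_mem_nhds hx)).hasDerivAt
  have hg' := hint2.sub (hint1.div_const (2 * m ^ 2))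
  have hbot : Tendsto g (𝓝[>] 0) (𝓝 0) := by
    have hsq : Tendsto (fun x : ℝ => x ^ 2) (𝓝[>] 0) (𝓝 0) := by
      simpa using ((continuous_pow 2).tendsto (0 : ℝ)).mono_left nhdsWithin_le_nhds
    simpa [g, mul_assoc] using hsq.mul hlim0
  have hr : Tendsto (fun x : ℝ => l - m ^ 2 / x - l * m ^ 2 / x ^ 2) atTop (𝓝 l) := by
    simpa using (tendsto_const_nhds.sub (tendsto_const_nhds.div_atTop tendsto_id)).sub
      (tendsto_const_nhds.div_atTop (tendsto_pow_atTop (α := ℝ) two_ne_zero))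
  have hgr : IntegrableOn (fun x => g x * (l - m ^ 2 / x - l * m ^ 2 / x ^ 2)) (Ioi 0) :=
    hint1.congr_fun (fun x (hx : 0 < x) => by simp only [g]; field_simp) measurableSet_Ioi
  have htop := tendsto_atTop_zero_of_hasDerivAt_of_integrableOn_mul hderiv hg' hr hl.ne' hgr
  have hftc := integral_Ioi_of_hasDerivAt_of_tendsto_nhdsGT hderiv hg' hbot htop
  rw [integral_sub hint2 (hint1.div_const _), integral_div, sub_zero, sub_eq_zero] at hftc
  rw [hftc, mul_div_cancel₀ _ (by positivity)]

/-- Stein identity for the inverse Gaussian distribution: if `X ~ IG(μ,λ)` and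
`f` is differentiable on `(0,∞)` with `f·φ → 0` at `0⁺` and at `∞`, and all
involved expectations are finite, then
`E[f(X)(λX² − μ²X − λμ²)] = 2μ² E[X² f'(X)]`. -/
theorem ig_stein_identity (m l : ℝ) (hm : 0 < m) (hl : 0 < l) (f : ℝ → ℝ)
    (hf : DifferentiableOn ℝ f (Ioi (0 : ℝ)))
    (hlim0 : Tendsto (fun x => f x * igPDF m l x) (nhdsWithin 0 (Ioi (0 : ℝ))) (nhds 0))
    (hlimtop : Tendsto (fun x => f x * igPDF m l x) atTop (nhds 0))
    (hint1 : IntegrableOn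
      (fun x => f x * (l * x ^ 2 - m ^ 2 * x - l * m ^ 2) * igPDF m l x)
      (Ioi (0 : ℝ)))
    (hint2 : IntegrableOn (fun x => x ^ 2 * deriv f x * igPDF m l x) (Ioi (0 : ℝ))) :
    ∫ x in Ioi (0 : ℝ), f x * (l * x ^ 2 - m ^ 2 * x - l * m ^ 2) * igPDF m l x =
      2 * m ^ 2 * ∫ x in Ioi (0 : ℝ), x ^ 2 * deriv f x * igPDF m l x :=
  ig_stein_identity_general m l hm hl f hf hlim0 hint1 hint2
end

section
/- Let X follow a negative binomial distribution NB(ν,π) with mean μ = ν(1−π)/π. Then for any bounded function f: ℕ → ℝ, ν·E[X f(X) − μ f(X+1)] = μ·E[X(f(X+1) − f(X))]. -/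
/-!
The pmf satisfies `(x + 1) P(x + 1) = (ν + x)(1 - π) P(x)`, so shifting the index gives
`E[X g(X)] = (1 - π) E[(ν + X) g(X + 1)]` whenever the left side converges. Since `ν + μ = ν / π`,
the difference of the two sides of the identity is `ν / π` times
`E[X f(X)] - (1 - π) E[(ν + X) f(X + 1)] = 0`.
-/

open Real Set

/-- The pmf of the negative binomial distribution `NB(ν,π)` with real `ν > 0`. -/
noncomputable def nbPMF (v p : ℝ) (x : ℕ) : ℝ :=
  (Real.Gamma (v + x) / (Real.Gamma v * x.factorial)) * (1 - p) ^ x * p ^ v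

open Filter Topology

theorem Summable.mul_of_abs_le {ι : Type*} {u g : ι → ℝ} (hu : Summable u) {C : ℝ}
    (hg : ∀ i, |g i| ≤ C) : Summable fun i => g i * u i :=
  (hu.abs.mul_left C).of_norm_bounded fun i => by
    rw [norm_mul, norm_eq_abs, norm_eq_abs]
    exact mul_le_mul_of_nonneg_right (hg i) (abs_nonneg _)

namespace NegBinomial

variable {v p : ℝ}

theorem nbPMF_pos (hv : 0 < v) (hp : p ∈ Ioo (0 : ℝ) 1) (x : ℕ) : 0 < nbPMF v p x := by
  have hq : 0 < 1 - p := sub_pos.mpr hp.2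
  have hΓ : 0 < Gamma (v + x) := Gamma_pos_of_pos (by positivity)
  have hΓv : 0 < Gamma v := Gamma_pos_of_pos hv
  have hpv : 0 < p ^ v := rpow_pos_of_pos hp.1 v
  unfold nbPMF
  positivity

theorem succ_mul_nbPMF_succ (p : ℝ) {x : ℕ} (hvx : v + x ≠ 0) :
    ((x : ℝ) + 1) * nbPMF v p (x + 1) = (v + x) * (1 - p) * nbPMF v p x := by
  have hΓ : Gamma (v + (x + 1 : ℕ)) = (v + x) * Gamma (v + x) := by
    rw [Nat.cast_succ, ← add_assoc, Gamma_add_one hvx]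
  unfold nbPMF
  rw [hΓ, Nat.factorial_succ, Nat.cast_mul, Nat.cast_succ]
  field_simp
  ring

theorem summable_natCast_mul_nbPMF (hv : 0 < v) (hp : p ∈ Ioo (0 : ℝ) 1) :
    Summable fun x : ℕ => (x : ℝ) * nbPMF v p x := by
  have hratio : ∀ᶠ x : ℕ in atTop,
      ‖((x + 1 : ℕ) : ℝ) * nbPMF v p (x + 1)‖ / ‖(x : ℝ) * nbPMF v p x‖
        = (1 - p) * (v / x + 1) := by
    filter_upwards [eventually_ge_atTop 1] with x hx
    have hx0 : (0 : ℝ) < x := by exact_mod_cast hx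
    have h0 := nbPMF_pos hv hp x
    have h1 := nbPMF_pos hv hp (x + 1)
    rw [norm_of_nonneg (by positivity), norm_of_nonneg (by positivity), Nat.cast_succ,
      succ_mul_nbPMF_succ p (by positivity : v + x ≠ 0)]
    field_simp
  have hlim : Tendsto (fun x : ℕ => (1 - p) * (v / x + 1)) atTop (𝓝 (1 - p)) := by
    simpa using ((tendsto_const_div_atTop_nhds_zero_nat v).add_const 1).const_mul (1 - p)
  refine summable_of_ratio_test_tendsto_lt_one (by linarith [hp.1]) ?_
    (hlim.congr' (EventuallyEq.symm hratio))
  filter_upwards [eventually_ge_atTop 1] with x hx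
  exact mul_ne_zero (by positivity) (nbPMF_pos hv hp x).ne'

theorem summable_nbPMF (hv : 0 < v) (hp : p ∈ Ioo (0 : ℝ) 1) : Summable (nbPMF v p) := by
  refine (summable_nat_add_iff 1).mp <|
    ((summable_nat_add_iff 1).mpr (summable_natCast_mul_nbPMF hv hp)).of_nonneg_of_le
      (fun x => (nbPMF_pos hv hp _).le) fun x =>
        le_mul_of_one_le_left (nbPMF_pos hv hp _).le (Nat.one_le_cast.mpr x.succ_pos)

theorem summable_natCast_mul_mul_nbPMF (hv : 0 < v) (hp : p ∈ Ioo (0 : ℝ) 1) {g : ℕ → ℝ}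
    {C : ℝ} (hg : ∀ x, |g x| ≤ C) : Summable fun x : ℕ => (x : ℝ) * g x * nbPMF v p x := by
  simpa only [mul_left_comm, mul_assoc] using (summable_natCast_mul_nbPMF hv hp).mul_of_abs_le hg

theorem tsum_natCast_mul_nbPMF (hv : 0 < v) (p : ℝ) {g : ℕ → ℝ}
    (hg : Summable fun x : ℕ => (x : ℝ) * g x * nbPMF v p x) :
    ∑' x : ℕ, (x : ℝ) * g x * nbPMF v p x =
      (1 - p) * ∑' x : ℕ, (v + x) * g (x + 1) * nbPMF v p x := by
  rw [hg.tsum_eq_zero_add, ← tsum_mul_left, Nat.cast_zero, zero_mul, zero_mul, zero_add]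
  refine tsum_congr fun x => ?_
  have hrec := succ_mul_nbPMF_succ p (by positivity : v + x ≠ 0)
  rw [Nat.cast_succ]
  linear_combination g (x + 1) * hrec

end NegBinomial

open NegBinomial in
/-- Stein identity for `NB(ν,π)` in the `(μ,ν)`-parametrization: for bounded
`f : ℕ → ℝ` and `μ = ν(1−π)/π`,
`ν·E[X f(X) − μ f(X+1)] = μ·E[X(f(X+1) − f(X))]`. -/
theorem nb_stein_nu (v p : ℝ) (hv : 0 < v) (hp : p ∈ Ioo (0 : ℝ) 1)
    (f : ℕ → ℝ) (hf : ∃ C, ∀ x, |f x| ≤ C) :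
    v * ∑' x : ℕ, ((x : ℝ) * f x - (v * (1 - p) / p) * f (x + 1)) * nbPMF v p x =
      (v * (1 - p) / p) *
        ∑' x : ℕ, (x : ℝ) * (f (x + 1) - f x) * nbPMF v p x := by
  obtain ⟨C, hC⟩ := hf
  have hXf := summable_natCast_mul_mul_nbPMF hv hp hC
  have hXf₁ : Summable fun x : ℕ => (x : ℝ) * f (x + 1) * nbPMF v p x :=
    summable_natCast_mul_mul_nbPMF hv hp fun x => hC (x + 1)
  have hf₁ : Summable fun x : ℕ => f (x + 1) * nbPMF v p x :=
    (summable_nbPMF hv hp).mul_of_abs_le fun x => hC (x + 1)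
  have hstein : ∑' x : ℕ, (x : ℝ) * f x * nbPMF v p x = (1 - p) *
      (v * ∑' x : ℕ, f (x + 1) * nbPMF v p x + ∑' x : ℕ, (x : ℝ) * f (x + 1) * nbPMF v p x) := by
    rw [tsum_natCast_mul_nbPMF hv p hXf, ← tsum_mul_left (a := v),
      ← (hf₁.mul_left v).tsum_add hXf₁]
    exact congrArg _ (tsum_congr fun x => by ring)
  have hlhs : ∑' x : ℕ, ((x : ℝ) * f x - v * (1 - p) / p * f (x + 1)) * nbPMF v p x =
      ∑' x : ℕ, (x : ℝ) * f x * nbPMF v p x -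
        v * (1 - p) / p * ∑' x : ℕ, f (x + 1) * nbPMF v p x := by
    rw [← tsum_mul_left, ← hXf.tsum_sub (hf₁.mul_left _)]
    exact tsum_congr fun x => by ring
  have hrhs : ∑' x : ℕ, (x : ℝ) * (f (x + 1) - f x) * nbPMF v p x =
      ∑' x : ℕ, (x : ℝ) * f (x + 1) * nbPMF v p x - ∑' x : ℕ, (x : ℝ) * f x * nbPMF v p x := by
    rw [← hXf₁.tsum_sub hXf]
    exact tsum_congr fun x => by ring
  rw [hlhs, hrhs, hstein]
  field_simp [hp.1.ne']
  ring
end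

section
/- Let X follow a negative binomial distribution NB(ν,π) with mean μ = ν(1−π)/π. Then for any bounded function f: ℕ → ℝ, π·E[(X − μ) f(X+1)] = E[X(f(X+1) − f(X))]. -/
open Real Set

/-!
The pmf satisfies the recursion `(x + 1) P(x + 1) = (1 - π)(ν + x) P(x)`, coming from
`Γ(ν + x + 1) = (ν + x) Γ(ν + x)`. Shifting the index in `E[X f(X)]` with it gives
`E[X f(X)] = (1 - π) E[(ν + X) f(X + 1)]`, and `π (x - μ) = x - (1 - π)(ν + x)` turns
the left-hand side into `E[X f(X + 1)] - E[X f(X)]`. The ratio test shows that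
`(ν + x) P(x)` is summable, which makes every series involved absolutely convergent.
-/

open Filter Topology

namespace NegativeBinomial

variable {v p : ℝ}

lemma nbPMF_pos (hv : 0 < v) (hp : p ∈ Ioo (0 : ℝ) 1) (x : ℕ) : 0 < nbPMF v p x := by
  have hΓx : 0 < Gamma (v + x) := Gamma_pos_of_pos (by positivity)
  have hΓ : 0 < Gamma v := Gamma_pos_of_pos hv
  have hq : 0 < 1 - p := sub_pos.mpr hp.2
  have hp0 : 0 < p := hp.1
  unfold nbPMF
  positivity

lemma succ_mul_nbPMF_succ (hv : 0 < v) (x : ℕ) :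
    ((x : ℝ) + 1) * nbPMF v p (x + 1) = (1 - p) * (v + x) * nbPMF v p x := by
  have hΓ : Gamma v ≠ 0 := (Gamma_pos_of_pos hv).ne'
  have hfact : (x.factorial : ℝ) ≠ 0 := Nat.cast_ne_zero.mpr x.factorial_ne_zero
  unfold nbPMF
  rw [show v + ((x + 1 : ℕ) : ℝ) = v + x + 1 by push_cast; ring,
    Gamma_add_one (by positivity), Nat.factorial_succ]
  push_cast
  field_simp
  ring

lemma summable_add_mul_nbPMF (hv : 0 < v) (hp : p ∈ Ioo (0 : ℝ) 1) :
    Summable fun x : ℕ => (v + x) * nbPMF v p x := by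
  have hterm_pos (x : ℕ) : 0 < (v + x) * nbPMF v p x :=
    mul_pos (by positivity) (nbPMF_pos hv hp x)
  have hratio (x : ℕ) : ‖(v + (x + 1 : ℕ)) * nbPMF v p (x + 1)‖ / ‖(v + x) * nbPMF v p x‖ =
      (1 - p) * (1 + v / (x + 1)) := by
    rw [Real.norm_of_nonneg (hterm_pos _).le, Real.norm_of_nonneg (hterm_pos _).le,
      div_eq_iff (hterm_pos x).ne']
    have hrec := succ_mul_nbPMF_succ (p := p) hv x
    field_simp
    push_cast
    linear_combination (v + x + 1) * hrec
  have hlim : Tendsto (fun x : ℕ => (1 - p) * (1 + v / ((x : ℝ) + 1))) atTop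
      (𝓝 ((1 - p) * (1 + 0))) :=
    (tendsto_const_nhds.add (tendsto_const_nhds.div_atTop
      (tendsto_atTop_add_const_right _ 1 tendsto_natCast_atTop_atTop))).const_mul _
  rw [add_zero, mul_one] at hlim
  refine summable_of_ratio_test_tendsto_lt_one (l := 1 - p) (by linarith [hp.1])
    (Eventually.of_forall fun x => (hterm_pos x).ne') ?_
  simpa only [hratio] using hlim

lemma summable_mul_nbPMF_of_abs_le (hv : 0 < v) (hp : p ∈ Ioo (0 : ℝ) 1) {g : ℕ → ℝ} (C : ℝ)
    (hg : ∀ x, |g x| ≤ C * (v + x)) : Summable fun x : ℕ => g x * nbPMF v p x := by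
  refine ((summable_add_mul_nbPMF hv hp).mul_left C).of_norm_bounded fun x => ?_
  rw [Real.norm_eq_abs, abs_mul, abs_of_pos (nbPMF_pos hv hp x), ← mul_assoc]
  exact mul_le_mul_of_nonneg_right (hg x) (nbPMF_pos hv hp x).le

lemma tsum_natCast_mul_nbPMF (hv : 0 < v) (f : ℕ → ℝ)
    (hf : Summable fun x : ℕ => (x : ℝ) * f x * nbPMF v p x) :
    ∑' x : ℕ, (x : ℝ) * f x * nbPMF v p x =
      (1 - p) * ∑' x : ℕ, (v + x) * f (x + 1) * nbPMF v p x := by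
  rw [hf.tsum_eq_zero_add, ← tsum_mul_left]
  simp only [Nat.cast_zero, zero_mul, zero_add, Nat.cast_succ]
  refine tsum_congr fun x => ?_
  linear_combination f (x + 1) * succ_mul_nbPMF_succ (p := p) hv x

end NegativeBinomial

open NegativeBinomial in
/-- Stein identity for `NB(ν,π)` in the `(μ,π)`-parametrization: for bounded
`f : ℕ → ℝ` and `μ = ν(1−π)/π`,
`π·E[(X − μ) f(X+1)] = E[X(f(X+1) − f(X))]`. -/
theorem nb_stein_pi (v p : ℝ) (hv : 0 < v) (hp : p ∈ Ioo (0 : ℝ) 1)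
    (f : ℕ → ℝ) (hf : ∃ C, ∀ x, |f x| ≤ C) :
    p * ∑' x : ℕ, ((x : ℝ) - v * (1 - p) / p) * f (x + 1) * nbPMF v p x =
      ∑' x : ℕ, (x : ℝ) * (f (x + 1) - f x) * nbPMF v p x := by
  obtain ⟨C, hC⟩ := hf
  have hbound {a : ℝ} (x y : ℕ) (ha : 0 ≤ a) (hax : a ≤ v + x) : |a * f y| ≤ C * (v + x) := by
    rw [abs_mul, abs_of_nonneg ha, mul_comm]
    exact mul_le_mul (hC y) hax ha ((abs_nonneg _).trans (hC y))
  have hshift : Summable fun x : ℕ => (v + x) * f (x + 1) * nbPMF v p x :=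
    summable_mul_nbPMF_of_abs_le hv hp C fun x => hbound x _ (by positivity) le_rfl
  have hsucc : Summable fun x : ℕ => (x : ℝ) * f (x + 1) * nbPMF v p x :=
    summable_mul_nbPMF_of_abs_le hv hp C fun x => hbound x _ x.cast_nonneg (by linarith)
  have hself : Summable fun x : ℕ => (x : ℝ) * f x * nbPMF v p x :=
    summable_mul_nbPMF_of_abs_le hv hp C fun x => hbound x _ x.cast_nonneg (by linarith)
  have hp0 : p ≠ 0 := hp.1.ne'
  calc p * ∑' x : ℕ, ((x : ℝ) - v * (1 - p) / p) * f (x + 1) * nbPMF v p x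
      = ∑' x : ℕ, ((x : ℝ) * f (x + 1) * nbPMF v p x
          - (1 - p) * ((v + x) * f (x + 1) * nbPMF v p x)) := by
        rw [← tsum_mul_left]
        exact tsum_congr fun x => by field_simp; ring
    _ = ∑' x : ℕ, (x : ℝ) * f (x + 1) * nbPMF v p x - ∑' x : ℕ, (x : ℝ) * f x * nbPMF v p x := by
        rw [hsucc.tsum_sub (hshift.mul_left _), tsum_mul_left, tsum_natCast_mul_nbPMF hv f hself]
    _ = ∑' x : ℕ, (x : ℝ) * (f (x + 1) - f x) * nbPMF v p x := by
        rw [← hsucc.tsum_sub hself]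
        exact tsum_congr fun x => by ring
end
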